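/- Let M be a topological space, let E, F, G be finite-dimensional inner product spaces over 𝕜 ∈ {ℝ, ℂ}, and let B : M → (E →L[𝕜] F →L[𝕜] G) be a continuous family of bilinear maps. Suppose (x_n)_{n∈ℕ} is a sequence in M converging to x ∈ M, and (U_n), (W_n), (Z_n) are sequences of subspaces of E, F, G respectively such that for every n and all u ∈ U_n, w ∈ W_n one has B(x_n)(u)(w) ∈ Z_n. If U_n → U, W_n → W and Z_n → Z in the gap metric (i.e. the corresponding orthogonal projections converge in operator norm), then B(x)(u)(w) ∈ Z for all u ∈ U and w ∈ W. -/

import Mathlib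

open FiniteDimensional Filter

/-- The orthogonal projection onto a subspace `V` of a finite-dimensional inner product
space, regarded as a continuous linear endomorphism. -/
noncomputable def orthProjection {𝕜 E : Type*} [RCLike 𝕜] [NormedAddCommGroup E]
    [InnerProductSpace 𝕜 E] [FiniteDimensional 𝕜 E] (V : Submodule 𝕜 E) : E →L[𝕜] E :=
  V.subtypeL.comp V.orthogonalProjectionOnto

/-!
Approximate `u ∈ U` and `w ∈ W` by `P_{U n} u ∈ U n` and `P_{W n} w ∈ W n`. The vectors
`B (x n) (P_{U n} u) (P_{W n} w)` lie in `Z n` and converge to `B x u w`. A limit `v` of vectors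
`v n ∈ Z n` lies in `Z`: passing to the limit in `P_{Z n} (v n) = v n` gives `P_Z v = v`.
-/

open Topology

theorem Filter.Tendsto.clm_apply {𝕜 E F ι : Type*} [NontriviallyNormedField 𝕜]
    [SeminormedAddCommGroup E] [NormedSpace 𝕜 E] [SeminormedAddCommGroup F] [NormedSpace 𝕜 F]
    {l : Filter ι} {f : ι → E →L[𝕜] F} {g : ι → E} {T : E →L[𝕜] F} {a : E}
    (hf : Tendsto f l (𝓝 T)) (hg : Tendsto g l (𝓝 a)) :
    Tendsto (fun i ↦ f i (g i)) l (𝓝 (T a)) :=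
  (isBoundedBilinearMap_apply.continuous.tendsto (T, a)).comp (hf.prodMk_nhds hg)

theorem ContinuousLinearMap.apply_eq_self_of_tendsto {𝕜 E ι : Type*} [NontriviallyNormedField 𝕜]
    [NormedAddCommGroup E] [NormedSpace 𝕜 E] {l : Filter ι} [l.NeBot]
    {Ps : ι → E →L[𝕜] E} {P : E →L[𝕜] E} {vs : ι → E} {v : E}
    (hP : Tendsto Ps l (𝓝 P)) (hv : Tendsto vs l (𝓝 v)) (hfix : ∀ᶠ i in l, Ps i (vs i) = vs i) :
    P v = v :=
  tendsto_nhds_unique ((hP.clm_apply hv).congr' hfix) hv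

section orthProjection

variable {𝕜 E ι : Type*} [RCLike 𝕜] [NormedAddCommGroup E] [InnerProductSpace 𝕜 E]
  [FiniteDimensional 𝕜 E]

theorem orthProjection_apply_mem (V : Submodule 𝕜 E) (v : E) : orthProjection V v ∈ V :=
  V.starProjection_apply_mem v

theorem orthProjection_apply_eq_self_iff {V : Submodule 𝕜 E} {v : E} :
    orthProjection V v = v ↔ v ∈ V :=
  V.starProjection_eq_self_iff

variable {l : Filter ι} {Vs : ι → Submodule 𝕜 E} {V : Submodule 𝕜 E}

theorem tendsto_orthProjection_apply_of_mem
    (hV : Tendsto (fun i ↦ orthProjection (Vs i)) l (𝓝 (orthProjection V))) {v : E}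
    (hv : v ∈ V) : Tendsto (fun i ↦ orthProjection (Vs i) v) l (𝓝 v) := by
  simpa only [orthProjection_apply_eq_self_iff.mpr hv] using hV.clm_apply (tendsto_const_nhds (x := v))

theorem mem_of_tendsto_orthProjection [l.NeBot]
    (hV : Tendsto (fun i ↦ orthProjection (Vs i)) l (𝓝 (orthProjection V))) {vs : ι → E} {v : E}
    (hv : Tendsto vs l (𝓝 v)) (hmem : ∀ᶠ i in l, vs i ∈ Vs i) : v ∈ V :=
  orthProjection_apply_eq_self_iff.mp <| ContinuousLinearMap.apply_eq_self_of_tendsto hV hv <|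
    hmem.mono fun _ ↦ orthProjection_apply_eq_self_iff.mpr

end orthProjection

/-- Stability under limits of a continuous family of bilinear maps: if
`B (x n) (U n) (W n) ⊆ Z n` along a sequence `x n → x` and `U n → U`, `W n → W`, `Z n → Z`
in the gap metric, then `B x U W ⊆ Z`. -/
theorem bilinear_gap_limit_mem {𝕜 E F G M : Type*} [RCLike 𝕜]
    [NormedAddCommGroup E] [InnerProductSpace 𝕜 E] [FiniteDimensional 𝕜 E]
    [NormedAddCommGroup F] [InnerProductSpace 𝕜 F] [FiniteDimensional 𝕜 F]
    [NormedAddCommGroup G] [InnerProductSpace 𝕜 G] [FiniteDimensional 𝕜 G]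
    [TopologicalSpace M]
    (B : M → (E →L[𝕜] F →L[𝕜] G)) (hB : Continuous B)
    (x : M) (xs : ℕ → M) (hxs : Tendsto xs atTop (nhds x))
    (Us : ℕ → Submodule 𝕜 E) (Ws : ℕ → Submodule 𝕜 F) (Zs : ℕ → Submodule 𝕜 G)
    (hmem : ∀ n, ∀ u ∈ Us n, ∀ w ∈ Ws n, B (xs n) u w ∈ Zs n)
    (U : Submodule 𝕜 E) (W : Submodule 𝕜 F) (Z : Submodule 𝕜 G)
    (hU : Tendsto (fun n => ‖orthProjection (Us n) - orthProjection U‖) atTop (nhds 0))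
    (hW : Tendsto (fun n => ‖orthProjection (Ws n) - orthProjection W‖) atTop (nhds 0))
    (hZ : Tendsto (fun n => ‖orthProjection (Zs n) - orthProjection Z‖) atTop (nhds 0)) :
    ∀ u ∈ U, ∀ w ∈ W, B x u w ∈ Z := by
  intro u hu w hw
  have hus := tendsto_orthProjection_apply_of_mem (tendsto_iff_norm_sub_tendsto_zero.mpr hU) hu
  have hws := tendsto_orthProjection_apply_of_mem (tendsto_iff_norm_sub_tendsto_zero.mpr hW) hw
  have hBs : Tendsto (fun n ↦ B (xs n)) atTop (𝓝 (B x)) := (hB.tendsto x).comp hxs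
  refine mem_of_tendsto_orthProjection (tendsto_iff_norm_sub_tendsto_zero.mpr hZ)
    ((hBs.clm_apply hus).clm_apply hws) (Eventually.of_forall fun n ↦ ?_)
  exact hmem n _ (orthProjection_apply_mem _ _) _ (orthProjection_apply_mem _ _)
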